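/- For the subfractal F_{X_A} of an HIFS satisfying the OSC, induced by an SFT with irreducible matrix: h ≤ dim_H(F_{X_A}), where h is the unique zero of the lower topological pressure function. -/

import Mathlib

/-!
Mass distribution principle. Up to the `μ`-null complement of the subfractal, a ball `B(x, r)`
centred on it is covered by at most `M` elements of the Moran cover `𝒰_r`. Each is a cylinder
image `f_ω(K)` of diameter `≤ r`, so the lower Lipschitz bounds give `c_ω ≤ r / diam K` and
hence `μ(f_ω(K)) ≤ (L₀/K₀) (r / diam K)^h`. Thus `μ(B(x, r)) ≤ C r^h` for small `r`, which
forces `H^h(F) > 0`. This needs `diam K > 0`: were `K` a point, every cylinder image would be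
`K` itself, of positive measure, while `μ(f_ω(K)) ≤ (L₀/K₀) c_ω^h → 0`.
-/

open Filter Finset MeasureTheory Metric
open scoped ENNReal Topology

/-- `applyWord f ω x = f_{ω_n} ∘ ⋯ ∘ f_{ω_1} (x)`. -/
def applyWord {X : Type*} {m : ℕ} (f : Fin m → X → X) {l : ℕ}
    (ω : Fin l → Fin m) (x : X) : X :=
  (List.ofFn ω).foldl (fun y a => f a y) x

theorem exists_nonneg_lt_one_forall_le {ι : Type*} [Fintype ι] {g : ι → ℝ} (hg : ∀ i, g i < 1) :
    ∃ b, 0 ≤ b ∧ b < 1 ∧ ∀ i, g i ≤ b := by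
  classical
  let s := insert 0 (univ.image g)
  have hs : s.Nonempty := insert_nonempty _ _
  refine ⟨s.max' hs, le_max' _ _ (mem_insert_self _ _), (max'_lt_iff _ hs).2 ?_,
    fun i => le_max' _ _ (mem_insert_of_mem (mem_image_of_mem _ (mem_univ i)))⟩
  simpa [s] using hg

theorem ENNReal.ofReal_mul_le_ofReal_mul (a : ℝ) {x y : ℝ} (hx : 0 ≤ x) (hxy : x ≤ y) :
    ENNReal.ofReal (a * x) ≤ ENNReal.ofReal (a * y) := by
  rw [ENNReal.ofReal_mul' hx, ENNReal.ofReal_mul' (hx.trans hxy)]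
  gcongr

theorem measure_le_of_subset_sUnion_of_ncard_le {X : Type*} [MeasurableSpace X] {μ : Measure X}
    {s t : Set X} {𝒰 : Set (Set X)} {a : ℝ≥0∞}
    (h𝒰 : 𝒰.Finite) (hsc : μ sᶜ = 0) (hcover : t ∩ s ⊆ ⋃₀ 𝒰) (hle : ∀ E ∈ 𝒰, μ E ≤ a) :
    μ t ≤ 𝒰.ncard * a :=
  calc μ t = μ (t ∩ s) := (measure_inter_conull hsc).symm
    _ ≤ μ (⋃ E ∈ h𝒰.toFinset, E) := measure_mono (by simpa [Set.sUnion_eq_biUnion] using hcover)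
    _ ≤ ∑ E ∈ h𝒰.toFinset, μ E := measure_biUnion_finset_le _ _
    _ ≤ h𝒰.toFinset.card • a := sum_le_card_nsmul _ _ _ (by simpa using hle)
    _ = 𝒰.ncard * a := by rw [nsmul_eq_mul, Set.ncard_eq_toFinset_card _ h𝒰]

section MassDistribution

variable {X : Type*} [MetricSpace X] [MeasurableSpace X] {μ : Measure X} {s : Set X}
  {h ε : ℝ} {C : ℝ≥0∞}

/-- A small set meeting `s` lies in every ball around one of its points of radius exceeding its
diameter; letting the radius decrease to the diameter turns the ball bound into a diameter
bound. -/
theorem measure_le_mul_ediam_rpow_of_measure_ball_le (hsc : μ sᶜ = 0) (hC : C ≠ ∞)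
    (hball : ∀ x ∈ s, ∀ r, 0 < r → r < ε → μ (ball x r) ≤ C * ENNReal.ofReal r ^ h)
    {t : Set X} (ht : ediam t < ENNReal.ofReal ε) : μ t ≤ C * ediam t ^ h := by
  rw [← measure_inter_conull hsc]
  rcases (t ∩ s).eq_empty_or_nonempty with hts | ⟨x, hxt, hxs⟩
  · simp [hts]
  have htb : Bornology.IsBounded t :=
    isBounded_iff_ediam_ne_top.2 (ht.trans ENNReal.ofReal_lt_top).ne
  have hdiam : ENNReal.ofReal (diam t) = ediam t := ENNReal.ofReal_toReal htb.ediam_ne_top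
  have hdε : diam t < ε := by
    rw [← hdiam] at ht
    exact (ENNReal.ofReal_lt_ofReal_iff_of_nonneg diam_nonneg).1 ht
  have hlim : Tendsto (fun r => C * ENNReal.ofReal r ^ h) (𝓝[>] diam t)
      (𝓝 (C * ediam t ^ h)) := by
    rw [← hdiam]
    exact ENNReal.Tendsto.const_mul ((ENNReal.continuous_rpow_const.comp
      ENNReal.continuous_ofReal).tendsto _ |>.mono_left nhdsWithin_le_nhds) (Or.inr hC)
  refine ge_of_tendsto hlim (eventually_of_mem (Ioo_mem_nhdsGT hdε) fun r hr => ?_)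
  refine (measure_mono fun y hy => ?_).trans
    (hball x hxs r (diam_nonneg.trans_lt hr.1) hr.2)
  exact mem_ball.2 ((dist_le_diam_of_mem htb hy.1 hxt).trans_lt hr.1)

variable [BorelSpace X]

theorem hausdorffMeasure_ne_zero_of_measure_ball_le (hs : μ s ≠ 0) (hsc : μ sᶜ = 0)
    (hC : C ≠ ∞) (hε : 0 < ε)
    (hball : ∀ x ∈ s, ∀ r, 0 < r → r < ε → μ (ball x r) ≤ C * ENNReal.ofReal r ^ h) :
    μH[h] s ≠ 0 := by
  have hle : (C + 1)⁻¹ • μ ≤ μH[h] := by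
    refine Measure.le_hausdorffMeasure h _ (ENNReal.ofReal (ε / 2)) (by simpa using hε)
      fun t ht => ?_
    rw [Measure.smul_apply, smul_eq_mul, ENNReal.inv_mul_le_iff (by simp) (by simpa using hC)]
    have ht' : ediam t < ENNReal.ofReal ε :=
      ht.trans_lt ((ENNReal.ofReal_lt_ofReal_iff hε).2 (half_lt_self hε))
    exact (measure_le_mul_ediam_rpow_of_measure_ball_le hsc hC hball ht').trans
      (by gcongr; exact le_self_add)
  intro h0
  have := Measure.le_iff'.1 hle s
  rw [h0, Measure.smul_apply, smul_eq_mul, nonpos_iff_eq_zero, mul_eq_zero] at this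
  exact this.elim (by simpa using hC) hs

theorem le_dimH_of_measure_ball_le (hh : 0 ≤ h) (hs : μ s ≠ 0) (hsc : μ sᶜ = 0)
    (hC : C ≠ ∞) (hε : 0 < ε)
    (hball : ∀ x ∈ s, ∀ r, 0 < r → r < ε → μ (ball x r) ≤ C * ENNReal.ofReal r ^ h) :
    ENNReal.ofReal h ≤ dimH s :=
  le_dimH_of_hausdorffMeasure_ne_zero <| by
    rw [Real.coe_toNNReal h hh]
    exact hausdorffMeasure_ne_zero_of_measure_ball_le hs hsc hC hε hball

end MassDistribution

section Words

variable {X : Type*} {m : ℕ} (f : Fin m → X → X)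

theorem applyWord_zero (ω : Fin 0 → Fin m) : applyWord f ω = id := by
  funext x
  simp [applyWord]

theorem applyWord_succ {l : ℕ} (ω : Fin (l + 1) → Fin m) (x : X) :
    applyWord f ω x = applyWord f (fun i : Fin l => ω i.succ) (f (ω 0) x) := by
  simp [applyWord, List.ofFn_succ]

variable {f} {K : Set X}

theorem mapsTo_applyWord (hfK : ∀ i, Set.MapsTo (f i) K K) {l : ℕ} (ω : Fin l → Fin m) :
    Set.MapsTo (applyWord f ω) K K := by
  induction l with
  | zero => simp [applyWord_zero, Set.mapsTo_id]
  | succ l ih =>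
    intro x hx
    rw [applyWord_succ]
    exact ih _ (hfK _ hx)

end Words

section Contractions

variable {X : Type*} [PseudoMetricSpace X] {m : ℕ} {f : Fin m → X → X} {K : Set X}

theorem dist_applyWord_le {b : ℝ} (hb : 0 ≤ b) (hfK : ∀ i, Set.MapsTo (f i) K K)
    (hlip : ∀ i, ∀ x ∈ K, ∀ y ∈ K, dist (f i x) (f i y) ≤ b * dist x y)
    {l : ℕ} (ω : Fin l → Fin m) {x y : X} (hx : x ∈ K) (hy : y ∈ K) :
    dist (applyWord f ω x) (applyWord f ω y) ≤ b ^ l * dist x y := by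
  induction l generalizing x y with
  | zero => simp [applyWord_zero]
  | succ l ih =>
    rw [applyWord_succ, applyWord_succ]
    calc _ ≤ b ^ l * dist (f (ω 0) x) (f (ω 0) y) := ih _ (hfK _ hx) (hfK _ hy)
      _ ≤ b ^ l * (b * dist x y) := by gcongr; exact hlip _ x hx y hy
      _ = b ^ (l + 1) * dist x y := by ring

theorem prod_mul_dist_le_dist_applyWord {c : Fin m → ℝ} (hc : ∀ i, 0 ≤ c i)
    (hfK : ∀ i, Set.MapsTo (f i) K K)
    (hlip : ∀ i, ∀ x ∈ K, ∀ y ∈ K, c i * dist x y ≤ dist (f i x) (f i y))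
    {l : ℕ} (ω : Fin l → Fin m) {x y : X} (hx : x ∈ K) (hy : y ∈ K) :
    (∏ i, c (ω i)) * dist x y ≤ dist (applyWord f ω x) (applyWord f ω y) := by
  induction l generalizing x y with
  | zero => simp [applyWord_zero]
  | succ l ih =>
    rw [applyWord_succ, applyWord_succ, Fin.prod_univ_succ]
    calc (c (ω 0) * ∏ i : Fin l, c (ω i.succ)) * dist x y
        = (∏ i : Fin l, c (ω i.succ)) * (c (ω 0) * dist x y) := by ring
      _ ≤ (∏ i : Fin l, c (ω i.succ)) * dist (f (ω 0) x) (f (ω 0) y) :=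
        mul_le_mul_of_nonneg_left (hlip _ x hx y hy) (prod_nonneg fun i _ => hc _)
      _ ≤ _ := ih _ (hfK _ hx) (hfK _ hy)

theorem diam_image_applyWord_le (hK : Bornology.IsBounded K) {b : ℝ} (hb : 0 ≤ b)
    (hfK : ∀ i, Set.MapsTo (f i) K K)
    (hlip : ∀ i, ∀ x ∈ K, ∀ y ∈ K, dist (f i x) (f i y) ≤ b * dist x y)
    {l : ℕ} (ω : Fin l → Fin m) : diam (applyWord f ω '' K) ≤ b ^ l * diam K := by
  refine diam_le_of_forall_dist_le (by positivity) ?_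
  rintro _ ⟨x, hx, rfl⟩ _ ⟨y, hy, rfl⟩
  exact (dist_applyWord_le hb hfK hlip ω hx hy).trans
    (by gcongr; exact dist_le_diam_of_mem hK hx hy)

theorem prod_mul_diam_le_diam_image_applyWord (hK : Bornology.IsBounded K) {c : Fin m → ℝ}
    (hc : ∀ i, 0 < c i) (hfK : ∀ i, Set.MapsTo (f i) K K)
    (hlip : ∀ i, ∀ x ∈ K, ∀ y ∈ K, c i * dist x y ≤ dist (f i x) (f i y))
    {l : ℕ} (ω : Fin l → Fin m) : (∏ i, c (ω i)) * diam K ≤ diam (applyWord f ω '' K) := by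
  have hprod : 0 < ∏ i, c (ω i) := prod_pos fun i _ => hc _
  have hb : Bornology.IsBounded (applyWord f ω '' K) :=
    hK.subset (mapsTo_applyWord hfK ω).image_subset
  rw [mul_comm, ← le_div_iff₀ hprod]
  refine diam_le_of_forall_dist_le (div_nonneg diam_nonneg hprod.le) fun x hx y hy => ?_
  rw [le_div_iff₀ hprod, mul_comm]
  exact (prod_mul_dist_le_dist_applyWord (fun i => (hc i).le) hfK hlip ω hx hy).trans
    (dist_le_diam_of_mem hb (Set.mem_image_of_mem _ hx) (Set.mem_image_of_mem _ hy))

theorem eventually_diam_image_applyWord_le (hK : Bornology.IsBounded K) {b : ℝ} (hb₀ : 0 ≤ b)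
    (hb₁ : b < 1) (hfK : ∀ i, Set.MapsTo (f i) K K)
    (hlip : ∀ i, ∀ x ∈ K, ∀ y ∈ K, dist (f i x) (f i y) ≤ b * dist x y) {r : ℝ} (hr : 0 < r) :
    ∀ᶠ l in atTop, ∀ ω : Fin l → Fin m, diam (applyWord f ω '' K) ≤ r := by
  have hlim : Tendsto (fun l : ℕ => b ^ l * diam K) atTop (𝓝 0) := by
    simpa using (tendsto_pow_atTop_nhds_zero_of_lt_one hb₀ hb₁).mul_const (diam K)
  filter_upwards [hlim.eventually (ge_mem_nhds hr)] with l hl ω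
  exact (diam_image_applyWord_le hK hb₀ hfK hlip ω).trans hl

end Contractions

section MoranCover

variable {X : Type*} [PseudoMetricSpace X] {m : ℕ} {f : Fin m → X → X} {K : Set X}
  {W : ∀ n : ℕ, Finset (Fin n → Fin m)} {r : ℝ}

/-- The Moran cover `𝒰_r`: the admissible cylinder images of diameter at most `r` whose parent
cylinder has diameter larger than `r`. -/
def moranCover (f : Fin m → X → X) (K : Set X) (W : ∀ n : ℕ, Finset (Fin n → Fin m)) (r : ℝ) :
    Set (Set X) :=
  {E | ∃ (l : ℕ) (ω : Fin (l + 1) → Fin m), ω ∈ W (l + 1) ∧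
    E = applyWord f ω '' K ∧ diam E ≤ r ∧
    r < diam (applyWord f (fun i : Fin l => ω i.castSucc) '' K)}

theorem moranCover_finite
    (hsmall : ∀ᶠ l in atTop, ∀ ω : Fin l → Fin m, diam (applyWord f ω '' K) ≤ r) :
    (moranCover f K W r).Finite := by
  obtain ⟨N, hN⟩ := eventually_atTop.1 hsmall
  refine ((Set.finite_Iio N).biUnion fun l _ =>
    Set.finite_range fun ω : Fin (l + 1) → Fin m => applyWord f ω '' K).subset ?_
  rintro _ ⟨l, ω, -, rfl, -, hparent⟩
  refine Set.mem_biUnion (x := l) (Set.mem_Iio.2 <| not_le.1 fun hl => ?_) ⟨ω, rfl⟩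
  exact hparent.not_ge (hN l hl _)

/-- Every admissible sequence has a prefix whose cylinder image belongs to `𝒰_r`: the shortest
prefix of diameter at most `r`, which is not the empty one as long as `r < diam K`. -/
theorem exists_prefix_mem_moranCover (z : ℕ → Fin m) (hz : ∀ n, (fun i : Fin n => z i) ∈ W n)
    (hrK : r < diam K) (hsmall : ∃ n, diam (applyWord f (fun i : Fin n => z i) '' K) ≤ r) :
    ∃ l, applyWord f (fun i : Fin (l + 1) => z i) '' K ∈ moranCover f K W r := by
  classical
  have hfind : Nat.find hsmall ≠ 0 := by
    intro h0
    have hspec := Nat.find_spec hsmall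
    rw [h0, applyWord_zero, Set.image_id] at hspec
    exact hspec.not_gt hrK
  obtain ⟨l, hl⟩ := Nat.exists_eq_succ_of_ne_zero hfind
  have hspec := Nat.find_spec hsmall
  rw [hl] at hspec
  exact ⟨l, l, _, hz (l + 1), rfl, hspec, not_le.1 (Nat.find_min hsmall (by omega))⟩

end MoranCover

section CylinderMeasure

variable {X : Type*} [MeasurableSpace X] {μ : Measure X} {m : ℕ}
  {f : Fin m → X → X} {K : Set X} {W : ∀ n : ℕ, Finset (Fin n → Fin m)} {c : Fin m → ℝ}
  {a h : ℝ}

theorem exists_measure_image_applyWord_lt (hc : ∀ i, 0 ≤ c i) {b : ℝ} (hb₀ : 0 ≤ b)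
    (hb₁ : b < 1) (hcb : ∀ i, c i ≤ b) (hh : 0 < h) (hW : ∀ n, (W n).Nonempty)
    (hμ : ∀ (l : ℕ) (ω : Fin l → Fin m), ω ∈ W l →
      μ (applyWord f ω '' K) ≤ ENNReal.ofReal (a * (∏ i, c (ω i)) ^ h))
    {δ : ℝ≥0∞} (hδ : 0 < δ) : ∃ (l : ℕ) (ω : Fin l → Fin m), μ (applyWord f ω '' K) < δ := by
  have hlim : Tendsto (fun l : ℕ => ENNReal.ofReal (a * (b ^ l) ^ h)) atTop (𝓝 0) := by
    simpa [Real.zero_rpow hh.ne'] using ENNReal.tendsto_ofReal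
      (((tendsto_pow_atTop_nhds_zero_of_lt_one hb₀ hb₁).rpow_const (Or.inr hh.le)).const_mul a)
  obtain ⟨l, hl⟩ := (hlim.eventually (gt_mem_nhds hδ)).exists
  obtain ⟨ω, hω⟩ := hW l
  have hprod₀ : 0 ≤ ∏ i, c (ω i) := prod_nonneg fun i _ => hc _
  have hprod : ∏ i, c (ω i) ≤ b ^ l :=
    (prod_le_prod (fun i _ => hc _) fun i _ => hcb _).trans_eq (by simp)
  refine ⟨l, ω, (hμ l ω hω).trans_lt (lt_of_le_of_lt ?_ hl)⟩
  exact ENNReal.ofReal_mul_le_ofReal_mul a (Real.rpow_nonneg hprod₀ h)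
    (Real.rpow_le_rpow hprod₀ hprod hh.le)

variable [PseudoMetricSpace X]

theorem measure_le_of_mem_moranCover (hK : Bornology.IsBounded K) (hc : ∀ i, 0 < c i)
    (hfK : ∀ i, Set.MapsTo (f i) K K)
    (hlip : ∀ i, ∀ x ∈ K, ∀ y ∈ K, c i * dist x y ≤ dist (f i x) (f i y)) (hh : 0 ≤ h)
    (hμ : ∀ (l : ℕ) (ω : Fin l → Fin m), ω ∈ W l →
      μ (applyWord f ω '' K) ≤ ENNReal.ofReal (a * (∏ i, c (ω i)) ^ h))
    {r : ℝ} (hK₀ : 0 < diam K) {E : Set X} (hE : E ∈ moranCover f K W r) :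
    μ E ≤ ENNReal.ofReal (a * (r / diam K) ^ h) := by
  obtain ⟨l, ω, hω, rfl, hdiam, -⟩ := hE
  have hprod : ∏ i, c (ω i) ≤ r / diam K := by
    rw [le_div_iff₀ hK₀]
    exact (prod_mul_diam_le_diam_image_applyWord hK hc hfK hlip ω).trans hdiam
  have hprod₀ : 0 ≤ ∏ i, c (ω i) := prod_nonneg fun i _ => (hc _).le
  exact (hμ _ ω hω).trans (ENNReal.ofReal_mul_le_ofReal_mul a (Real.rpow_nonneg hprod₀ h)
    (Real.rpow_le_rpow hprod₀ hprod hh))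

theorem measure_ball_le_of_ncard_moranCover_le (hK : Bornology.IsBounded K)
    (hc : ∀ i, 0 < c i) {b : ℝ} (hb₀ : 0 ≤ b) (hb₁ : b < 1) (hfK : ∀ i, Set.MapsTo (f i) K K)
    (hlip_c : ∀ i, ∀ x ∈ K, ∀ y ∈ K, c i * dist x y ≤ dist (f i x) (f i y))
    (hlip_b : ∀ i, ∀ x ∈ K, ∀ y ∈ K, dist (f i x) (f i y) ≤ b * dist x y)
    {π : {z : ℕ → Fin m // ∀ n : ℕ, (fun i : Fin n => z i.1) ∈ W n} → X}
    (hπ : ∀ z (l : ℕ), π z ∈ applyWord f (fun i : Fin l => z.1 i.1) '' K)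
    (hμsupp : μ (Set.range π)ᶜ = 0) (hh : 0 ≤ h)
    (hμ : ∀ (l : ℕ) (ω : Fin l → Fin m), ω ∈ W l →
      μ (applyWord f ω '' K) ≤ ENNReal.ofReal (a * (∏ i, c (ω i)) ^ h))
    {M : ℕ} {x : X} {r : ℝ} (hr : 0 < r) (hrK : r < diam K)
    (hM : {E ∈ moranCover f K W r | (E ∩ ball x r).Nonempty}.ncard ≤ M) :
    μ (ball x r) ≤ M * ENNReal.ofReal (a / diam K ^ h) * ENNReal.ofReal r ^ h := by
  have hK₀ : 0 < diam K := hr.trans hrK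
  have hsmall := eventually_diam_image_applyWord_le hK hb₀ hb₁ hfK hlip_b hr
  have hcover : ball x r ∩ Set.range π ⊆
      ⋃₀ {E ∈ moranCover f K W r | (E ∩ ball x r).Nonempty} := by
    rintro _ ⟨hy, z, rfl⟩
    obtain ⟨n, hn⟩ := hsmall.exists
    obtain ⟨l, hl⟩ := exists_prefix_mem_moranCover z.1 z.2 hrK ⟨n, hn _⟩
    exact ⟨_, ⟨hl, π z, hπ z _, hy⟩, hπ z _⟩
  have hscale : a * (r / diam K) ^ h = a / diam K ^ h * r ^ h := by
    rw [Real.div_rpow hr.le hK₀.le]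
    ring
  calc μ (ball x r) ≤ M * ENNReal.ofReal (a * (r / diam K) ^ h) :=
        (measure_le_of_subset_sUnion_of_ncard_le
          ((moranCover_finite hsmall).subset (Set.sep_subset _ _)) hμsupp hcover
          fun E hE => measure_le_of_mem_moranCover hK hc hfK hlip_c hh hμ hK₀ hE.1).trans
          (by gcongr)
    _ = M * ENNReal.ofReal (a / diam K ^ h) * ENNReal.ofReal r ^ h := by
        rw [hscale, ENNReal.ofReal_mul' (by positivity), ENNReal.ofReal_rpow_of_nonneg hr.le hh,
          mul_assoc]

end CylinderMeasure

theorem diam_pos_of_measure_image_applyWord_lt {X : Type*} [MetricSpace X] [MeasurableSpace X]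
    {μ : Measure X} {m : ℕ} {f : Fin m → X → X} {K : Set X} (hK : Bornology.IsBounded K)
    (hKne : K.Nonempty) (hfK : ∀ i, Set.MapsTo (f i) K K) {l : ℕ} (ω : Fin l → Fin m)
    (hω : μ (applyWord f ω '' K) < μ K) : 0 < diam K := by
  by_contra hdiam
  obtain ⟨x, hx⟩ := hKne
  have hKx : K = {x} :=
    (Set.not_nontrivial_iff.1 fun hK' => hdiam (diam_pos hK' hK)).eq_singleton_of_mem hx
  have hfix : applyWord f ω x = x := by simpa [hKx] using mapsTo_applyWord hfK ω hx
  exact hω.ne (by rw [hKx, Set.image_singleton, hfix])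

theorem subfractal_dimH_lower_bound_general
    {d : ℕ} (m : ℕ)
    (K : Set (EuclideanSpace ℝ (Fin d))) (hK : IsCompact K) (hKne : K.Nonempty)
    (f : Fin m → EuclideanSpace ℝ (Fin d) → EuclideanSpace ℝ (Fin d))
    (hfK : ∀ i, Set.MapsTo (f i) K K)
    (c cbar : Fin m → ℝ) (hc : ∀ i, 0 < c i ∧ c i ≤ cbar i ∧ cbar i < 1)
    (hlip : ∀ i, ∀ x ∈ K, ∀ y ∈ K,
      c i * dist x y ≤ dist (f i x) (f i y) ∧ dist (f i x) (f i y) ≤ cbar i * dist x y)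
    -- the SFT and its subfractal, given by the coding map `π`
    (W : ∀ n : ℕ, Finset (Fin n → Fin m)) (hWne : ∀ n, (W n).Nonempty)
    (π : {x : ℕ → Fin m // ∀ n : ℕ, (fun i : Fin n => x i.1) ∈ W n} →
      EuclideanSpace ℝ (Fin d))
    (hπ : ∀ x (l : ℕ), π x ∈ applyWord f (fun i : Fin l => x.1 i.1) '' K)
    (h : ℝ)
    (K0 L0 : ℝ)
    -- the measure `μ_h`, supported on the subfractal, with the cylinder-image bound
    (μ : Measure (EuclideanSpace ℝ (Fin d))) (hμprob : IsProbabilityMeasure μ)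
    (hμsupp : μ (Set.range π)ᶜ = 0)
    (hμbound : ∀ (l : ℕ) (ω : Fin l → Fin m), ω ∈ W l →
      μ (applyWord f ω '' K) ≤ ENNReal.ofReal ((L0 / K0) * (∏ i, c (ω i)) ^ h))
    -- the Moran cover intersection bound
    (M : ℕ)
    (hMoran : ∀ r : ℝ, 0 < r → r < 1 → ∀ x ∈ Set.range π,
      {E : Set (EuclideanSpace ℝ (Fin d)) |
        (∃ (l : ℕ) (ω : Fin (l + 1) → Fin m), ω ∈ W (l + 1) ∧
          E = applyWord f ω '' K ∧ diam E ≤ r ∧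
          r < diam (applyWord f (fun i : Fin l => ω i.castSucc) '' K)) ∧
        (E ∩ ball x r).Nonempty}.ncard ≤ M) :
    ENNReal.ofReal h ≤ dimH (Set.range π) := by
  rcases le_or_gt h 0 with hh | hh
  · simp [ENNReal.ofReal_eq_zero.2 hh]
  obtain ⟨b, hb₀, hb₁, hcb⟩ := exists_nonneg_lt_one_forall_le fun i => (hc i).2.2
  have hlip_c i x hx y hy := (hlip i x hx y hy).1
  have hlip_b : ∀ i, ∀ x ∈ K, ∀ y ∈ K, dist (f i x) (f i y) ≤ b * dist x y := fun i x hx y hy =>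
    (hlip i x hx y hy).2.trans (mul_le_mul_of_nonneg_right (hcb i) dist_nonneg)
  have hμπ : μ (Set.range π) ≠ 0 := by
    rw [← Set.univ_inter (Set.range π), measure_inter_conull hμsupp]
    simp
  have hμK : μ K ≠ 0 := fun h0 => hμπ <| measure_mono_null
    (Set.range_subset_iff.2 fun z => by simpa [applyWord_zero] using hπ z 0) h0
  obtain ⟨l, ω, hω⟩ := exists_measure_image_applyWord_lt (fun i => (hc i).1.le) hb₀ hb₁
    (fun i => (hc i).2.1.trans (hcb i)) hh hWne hμbound (pos_iff_ne_zero.2 hμK)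
  have hK₀ := diam_pos_of_measure_image_applyWord_lt hK.isBounded hKne hfK ω hω
  refine le_dimH_of_measure_ball_le hh.le hμπ hμsupp
    (C := M * ENNReal.ofReal (L0 / K0 / diam K ^ h)) (by finiteness) (lt_min one_pos hK₀)
    fun x hx r hr hrε => ?_
  exact measure_ball_le_of_ncard_moranCover_le hK.isBounded (fun i => (hc i).1) hb₀ hb₁ hfK
    hlip_c hlip_b hπ hμsupp hh.le hμbound hr (hrε.trans_le (min_le_right _ _))
    (hMoran r hr (hrε.trans_le (min_le_left _ _)) x hx)

/-- For the subfractal `F_{X_A}` of an HIFS satisfying the OSC, induced by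
an SFT with irreducible matrix: `h ≤ dim_H (F_{X_A})`, where `h` is the unique zero of the
lower topological pressure function. -/
theorem subfractal_dimH_lower_bound
    {d : ℕ} (m : ℕ) (hm : 0 < m)
    (K : Set (EuclideanSpace ℝ (Fin d))) (hK : IsCompact K) (hKne : K.Nonempty)
    (f : Fin m → EuclideanSpace ℝ (Fin d) → EuclideanSpace ℝ (Fin d))
    (hfK : ∀ i, Set.MapsTo (f i) K K)
    (c cbar : Fin m → ℝ) (hc : ∀ i, 0 < c i ∧ c i ≤ cbar i ∧ cbar i < 1)
    (hlip : ∀ i, ∀ x ∈ K, ∀ y ∈ K,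
      c i * dist x y ≤ dist (f i x) (f i y) ∧ dist (f i x) (f i y) ≤ cbar i * dist x y)
    -- the open set condition
    (U : Set (EuclideanSpace ℝ (Fin d))) (hUopen : IsOpen U) (hUne : U.Nonempty)
    (hUK : U ⊆ K) (hUinv : ∀ i, f i '' U ⊆ U)
    (hUdisj : ∀ i j, i ≠ j → (f i '' U) ∩ (f j '' U) = ∅)
    -- the SFT and its subfractal, given by the coding map `π`
    (W : ∀ n : ℕ, Finset (Fin n → Fin m)) (hWne : ∀ n, (W n).Nonempty)
    (π : {x : ℕ → Fin m // ∀ n : ℕ, (fun i : Fin n => x i.1) ∈ W n} →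
      EuclideanSpace ℝ (Fin d))
    (hπ : ∀ x (l : ℕ), π x ∈ applyWord f (fun i : Fin l => x.1 i.1) '' K)
    -- the lower topological pressure function and its unique zero `h`
    (P : ℝ → ℝ)
    (hP : ∀ t : ℝ, Tendsto
      (fun n : ℕ => (1 / (n : ℝ)) * Real.log (∑ ω ∈ W n, (∏ i, c (ω i)) ^ t))
      atTop (nhds (P t)))
    (h : ℝ) (hh0 : 0 ≤ h) (hhzero : P h = 0)
    (K0 L0 : ℝ) (hK0 : 0 < K0) (hL0 : 0 < L0)
    -- the measure `μ_h`, supported on the subfractal, with the cylinder-image bound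
    (μ : Measure (EuclideanSpace ℝ (Fin d))) (hμprob : IsProbabilityMeasure μ)
    (hμsupp : μ (Set.range π)ᶜ = 0)
    (hμbound : ∀ (l : ℕ) (ω : Fin l → Fin m), ω ∈ W l →
      μ (applyWord f ω '' K) ≤ ENNReal.ofReal ((L0 / K0) * (∏ i, c (ω i)) ^ h))
    -- the Moran cover intersection bound
    (M : ℕ)
    (hMoran : ∀ r : ℝ, 0 < r → r < 1 → ∀ x ∈ Set.range π,
      {E : Set (EuclideanSpace ℝ (Fin d)) |
        (∃ (l : ℕ) (ω : Fin (l + 1) → Fin m), ω ∈ W (l + 1) ∧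
          E = applyWord f ω '' K ∧ diam E ≤ r ∧
          r < diam (applyWord f (fun i : Fin l => ω i.castSucc) '' K)) ∧
        (E ∩ ball x r).Nonempty}.ncard ≤ M) :
    ENNReal.ofReal h ≤ dimH (Set.range π) :=
  subfractal_dimH_lower_bound_general m K hK hKne f hfK c cbar hc hlip W hWne π hπ h K0 L0 μ hμprob
    hμsupp hμbound M hMoran
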